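/- arXiv:1612.04638 — 2 statements merged into one kernel-verified Lean document; each statement's English description precedes it below -/
import Mathlib

section
/- Let g be a constant real symmetric invertible 3×3 matrix, φ, ψ : U → ℝ smooth on an open set U ⊆ ℝ³ with ∇φ × ∇ψ ≠ 0 on U; set Z0 := ∇φ × ∇ψ, Z1 := g⁻¹∇φ, Z2 := g⁻¹∇ψ. Suppose h, V : U → ℝ are smooth and, with Z := h·Z0, for every index i one has Σ_j g_{ij} (Σ_k Z^k ∂Z^j/∂x^k) = −∂V/∂x^i on U. Then on U: Z0(½ h² g(Z0,Z0) + V) = 0, Z1(V) = −h²·∇_{Z0}Z0(φ), and Z2(V) = −h²·∇_{Z0}Z0(ψ). -/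
noncomputable section

/-- Partial derivative `∂f/∂xⁱ` at `p`. -/
def pd (i : Fin 3) (f : (Fin 3 → ℝ) → ℝ) (p : Fin 3 → ℝ) : ℝ :=
  fderiv ℝ f p (Pi.single i 1)

/-- Gradient of a scalar function. -/
def grad (f : (Fin 3 → ℝ) → ℝ) (p : Fin 3 → ℝ) : Fin 3 → ℝ :=
  fun i => pd i f p

/-- Directional derivative `Σᵢ vⁱ ∂f/∂xⁱ` of `f` along the vector `v` at `p`. -/
def dd (v : Fin 3 → ℝ) (f : (Fin 3 → ℝ) → ℝ) (p : Fin 3 → ℝ) : ℝ :=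
  ∑ i, v i * pd i f p

/-- `(∇_W W)ⁱ = Σⱼ Wʲ ∂Wⁱ/∂xʲ`. -/
def nab (W : (Fin 3 → ℝ) → (Fin 3 → ℝ)) (p : Fin 3 → ℝ) : Fin 3 → ℝ :=
  fun i => ∑ j, W p j * pd j (fun q => W q i) p

/-- Euclidean cross product on `ℝ³`. -/
def cross (a b : Fin 3 → ℝ) : Fin 3 → ℝ :=
  ![a 1 * b 2 - a 2 * b 1, a 2 * b 0 - a 0 * b 2, a 0 * b 1 - a 1 * b 0]

/-- `g(v,w) = Σᵢⱼ gᵢⱼ vⁱ wʲ`. -/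
def gB (g : Matrix (Fin 3) (Fin 3) ℝ) (v w : Fin 3 → ℝ) : ℝ :=
  ∑ i, ∑ j, g i j * v i * w j

/-- Lie bracket of vector fields: `[V,W]ⁱ = Σⱼ (Vʲ ∂Wⁱ/∂xʲ − Wʲ ∂Vⁱ/∂xʲ)`. -/
def lieB (V W : (Fin 3 → ℝ) → (Fin 3 → ℝ)) (p : Fin 3 → ℝ) : Fin 3 → ℝ :=
  fun i => ∑ j, (V p j * pd j (fun q => W q i) p - W p j * pd j (fun q => V q i) p)

/-- curl of a vector field on `ℝ³`. -/
def curl (a : (Fin 3 → ℝ) → (Fin 3 → ℝ)) (p : Fin 3 → ℝ) : Fin 3 → ℝ :=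
  ![pd 1 (fun q => a q 2) p - pd 2 (fun q => a q 1) p,
    pd 2 (fun q => a q 0) p - pd 0 (fun q => a q 2) p,
    pd 0 (fun q => a q 1) p - pd 1 (fun q => a q 0) p]

/-- divergence of a vector field. -/
def divg (W : (Fin 3 → ℝ) → (Fin 3 → ℝ)) (p : Fin 3 → ℝ) : ℝ :=
  ∑ i, pd i (fun q => W q i) p

/-- Euclidean inner product on `ℝ³`. -/
def ip (a b : Fin 3 → ℝ) : ℝ := ∑ i, a i * b i

open Matrix Topology

/-!
Write `Z = h • Z0`. The force condition says `g (∇_Z Z) = -dV`, so `W(V) = -g(W, ∇_Z Z)` for every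
vector `W`. For `W = Z0`: as `Z` is parallel to `Z0` and `g` is constant and symmetric,
`g(Z0, ∇_Z Z) = g(Z, ∇_{Z0} Z) = Z0(½ g(Z, Z))`, which gives (2.9). For `W = g⁻¹∇φ`:
`g(g⁻¹∇φ, ∇_Z Z) = dφ(∇_Z Z) = h Z0(h) Z0(φ) + h² (∇_{Z0} Z0)(φ)`, and `Z0(φ) = 0` because
`Z0 = ∇φ × ∇ψ` is orthogonal to `∇φ`; likewise for `ψ`.
-/

section DirectionalDerivative

variable {v p : Fin 3 → ℝ} {f k : (Fin 3 → ℝ) → ℝ}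

theorem dd_eq_dotProduct_grad : dd v f p = v ⬝ᵥ grad f p := rfl

theorem dd_eq_fderiv : dd v f p = fderiv ℝ f p v := by
  conv_rhs => rw [← Finset.univ_sum_single v]
  rw [map_sum]
  refine Finset.sum_congr rfl fun i _ => ?_
  rw [pd, ← smul_eq_mul, ← map_smul, ← Pi.single_smul', smul_eq_mul, mul_one]

theorem dd_add (hf : DifferentiableAt ℝ f p) (hk : DifferentiableAt ℝ k p) :
    dd v (fun q => f q + k q) p = dd v f p + dd v k p := by
  simp only [dd_eq_fderiv, fderiv_fun_add hf hk, _root_.add_apply]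

end DirectionalDerivative

section BilinearForm

variable {g : Matrix (Fin 3) (Fin 3) ℝ}

theorem gB_eq_dotProduct_mulVec (v w : Fin 3 → ℝ) : gB g v w = v ⬝ᵥ g *ᵥ w := by
  simp only [gB, dotProduct, mulVec, Finset.mul_sum]
  exact Finset.sum_congr rfl fun i _ => Finset.sum_congr rfl fun j _ => by ring

theorem gB_smul_left (c : ℝ) (v w : Fin 3 → ℝ) : gB g (c • v) w = c * gB g v w := by
  simp only [gB_eq_dotProduct_mulVec, smul_dotProduct, smul_eq_mul]

theorem gB_smul_right (c : ℝ) (v w : Fin 3 → ℝ) : gB g v (c • w) = c * gB g v w := by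
  simp only [gB_eq_dotProduct_mulVec, mulVec_smul, dotProduct_smul, smul_eq_mul]

theorem gB_comm (hg : g.IsSymm) (v w : Fin 3 → ℝ) : gB g v w = gB g w v := by
  rw [gB_eq_dotProduct_mulVec, gB_eq_dotProduct_mulVec, dotProduct_comm, dotProduct_mulVec,
    ← vecMul_transpose, hg.eq]

theorem gB_inv_mulVec_left (hg : g.IsSymm) (hdet : IsUnit g.det) (v w : Fin 3 → ℝ) :
    gB g (g⁻¹ *ᵥ v) w = v ⬝ᵥ w := by
  rw [gB_comm hg, gB_eq_dotProduct_mulVec, mulVec_mulVec, mul_nonsing_inv _ hdet, one_mulVec,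
    dotProduct_comm]

theorem differentiableAt_gB_self {W : (Fin 3 → ℝ) → Fin 3 → ℝ} {p : Fin 3 → ℝ}
    (hW : DifferentiableAt ℝ W p) : DifferentiableAt ℝ (fun q => gB g (W q) (W q)) p := by
  unfold gB
  fun_prop

theorem dd_gB_self (hg : g.IsSymm) {W : (Fin 3 → ℝ) → Fin 3 → ℝ} {p : Fin 3 → ℝ}
    (hW : DifferentiableAt ℝ W p) (v : Fin 3 → ℝ) :
    dd v (fun q => gB g (W q) (W q)) p = 2 * gB g (W p) (fderiv ℝ W p v) := by
  rw [dd_eq_fderiv, two_mul]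
  nth_rw 1 [gB_comm hg]
  simp (disch := fun_prop) only [gB, fderiv_fun_sum, fderiv_fun_mul, fderiv_apply hW,
    fderiv_const_apply, smul_zero, add_zero, ← Finset.sum_add_distrib]
  simp only [_root_.sum_apply, _root_.add_apply, _root_.smul_apply,
    ContinuousLinearMap.comp_apply, ContinuousLinearMap.proj_apply, smul_eq_mul]
  exact Finset.sum_congr rfl fun i _ => Finset.sum_congr rfl fun j _ => by ring

end BilinearForm

section VectorField

variable {W : (Fin 3 → ℝ) → Fin 3 → ℝ} {p : Fin 3 → ℝ}

theorem nab_eq_fderiv (hW : DifferentiableAt ℝ W p) : nab W p = fderiv ℝ W p (W p) := by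
  ext i
  change dd (W p) (fun q => W q i) p = _
  rw [dd_eq_fderiv, fderiv_apply hW]
  rfl

theorem nab_smul {h : (Fin 3 → ℝ) → ℝ} (hh : DifferentiableAt ℝ h p)
    (hW : DifferentiableAt ℝ W p) :
    nab (fun q => h q • W q) p = (h p * dd (W p) h p) • W p + h p ^ 2 • nab W p := by
  rw [nab_eq_fderiv (W := fun q => h q • W q) (hh.smul hW), fderiv_fun_smul hh hW,
    nab_eq_fderiv hW, dd_eq_fderiv]
  simp only [_root_.add_apply, _root_.smul_apply, ContinuousLinearMap.smulRight_apply, map_smul]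
  module

theorem dd_half_gB_self_of_eq_smul {g : Matrix (Fin 3) (Fin 3) ℝ} (hg : g.IsSymm)
    (hW : DifferentiableAt ℝ W p) {c : ℝ} {v : Fin 3 → ℝ} (hWv : W p = c • v) :
    dd v (fun q => 1 / 2 * gB g (W q) (W q)) p = gB g v (nab W p) := by
  rw [dd_eq_fderiv, fderiv_const_mul (differentiableAt_gB_self hW), _root_.smul_apply,
    ← dd_eq_fderiv, dd_gB_self hg hW, nab_eq_fderiv hW, hWv, map_smul, gB_smul_left,
    gB_smul_right, smul_eq_mul]
  ring

theorem dd_eq_neg_gB_nab_of_force {g : Matrix (Fin 3) (Fin 3) ℝ} {V : (Fin 3 → ℝ) → ℝ}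
    (hforce : ∀ i, ∑ j, g i j * nab W p j = -pd i V p) (v : Fin 3 → ℝ) :
    dd v V p = -gB g v (nab W p) := by
  have hgrad : grad V p = -(g *ᵥ nab W p) :=
    funext fun i => (neg_eq_iff_eq_neg.2 (hforce i)).symm
  rw [dd_eq_dotProduct_grad, hgrad, dotProduct_neg, gB_eq_dotProduct_mulVec]

end VectorField

theorem cross_eq_crossProduct (a b : Fin 3 → ℝ) : cross a b = a ⨯₃ b :=
  (cross_apply a b).symm

theorem DifferentiableAt.cross {a b : (Fin 3 → ℝ) → Fin 3 → ℝ} {p : Fin 3 → ℝ}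
    (ha : DifferentiableAt ℝ a p) (hb : DifferentiableAt ℝ b p) :
    DifferentiableAt ℝ (fun q => _root_.cross (a q) (b q)) p := by
  rw [differentiableAt_pi]
  intro i
  fin_cases i <;> simp only [_root_.cross, Fin.isValue, Fin.reduceFinMk, cons_val] <;> fun_prop

theorem differentiableAt_grad {f : (Fin 3 → ℝ) → ℝ} {p : Fin 3 → ℝ} (hf : ContDiffAt ℝ 2 f p) :
    DifferentiableAt ℝ (grad f) p :=
  differentiableAt_pi.2 fun _ =>
    ((hf.fderiv_right one_add_one_eq_two.le).clm_apply contDiffAt_const).differentiableAt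
      one_ne_zero

theorem fundamental_equations_general
    (g : Matrix (Fin 3) (Fin 3) ℝ) (hsym : g.IsSymm) (hinv : IsUnit g.det)
    (U : Set (Fin 3 → ℝ)) (hU : IsOpen U)
    (φ ψ h V : (Fin 3 → ℝ) → ℝ)
    (hφ : ContDiffOn ℝ (⊤ : ℕ∞) φ U) (hψ : ContDiffOn ℝ (⊤ : ℕ∞) ψ U)
    (hh : ContDiffOn ℝ (⊤ : ℕ∞) h U) (hV : ContDiffOn ℝ (⊤ : ℕ∞) V U)
    (Z0 Z1 Z2 Z : (Fin 3 → ℝ) → (Fin 3 → ℝ))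
    (hZ0 : Z0 = fun p => cross (grad φ p) (grad ψ p))
    (hZ1 : Z1 = fun p => g⁻¹.mulVec (grad φ p))
    (hZ2 : Z2 = fun p => g⁻¹.mulVec (grad ψ p))
    (hZ : Z = fun p => h p • Z0 p)
    (hforce : ∀ p ∈ U, ∀ i,
      (∑ j, g i j * (∑ k, Z p k * pd k (fun q => Z q j) p)) = - pd i V p)
    (p : Fin 3 → ℝ) (hp : p ∈ U) :
    dd (Z0 p) (fun q => 1/2 * h q ^ 2 * gB g (Z0 q) (Z0 q) + V q) p = 0 ∧
    dd (Z1 p) V p = - h p ^ 2 * dd (nab Z0 p) φ p ∧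
    dd (Z2 p) V p = - h p ^ 2 * dd (nab Z0 p) ψ p := by
  have hUp : U ∈ 𝓝 p := hU.mem_nhds hp
  have hφ2 : ContDiffAt ℝ 2 φ p := (hφ.contDiffAt hUp).of_le (by norm_cast)
  have hψ2 : ContDiffAt ℝ 2 ψ p := (hψ.contDiffAt hUp).of_le (by norm_cast)
  have hhd : DifferentiableAt ℝ h p := (hh.contDiffAt hUp).differentiableAt (by simp)
  have hVd : DifferentiableAt ℝ V p := (hV.contDiffAt hUp).differentiableAt (by simp)
  have hZ0d : DifferentiableAt ℝ Z0 p :=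
    hZ0 ▸ (differentiableAt_grad hφ2).cross (differentiableAt_grad hψ2)
  have hZd : DifferentiableAt ℝ Z p := hZ ▸ hhd.smul hZ0d
  have force : ∀ v, dd v V p = -gB g v (nab Z p) := dd_eq_neg_gB_nab_of_force (hforce p hp)
  have accel : nab Z p = (h p * dd (Z0 p) h p) • Z0 p + h p ^ 2 • nab Z0 p :=
    hZ ▸ nab_smul hhd hZ0d
  have transverse : ∀ f, grad f p ⬝ᵥ Z0 p = 0 →
      dd (g⁻¹ *ᵥ grad f p) V p = -h p ^ 2 * dd (nab Z0 p) f p := by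
    intro f hf
    rw [force, gB_inv_mulVec_left hsym hinv, accel, dotProduct_add, dotProduct_smul,
      dotProduct_smul, hf, smul_zero, zero_add, dd_eq_dotProduct_grad (v := nab Z0 p),
      dotProduct_comm (nab Z0 p), smul_eq_mul, neg_mul]
  have kinetic : ∀ q, 1 / 2 * h q ^ 2 * gB g (Z0 q) (Z0 q) = 1 / 2 * gB g (Z q) (Z q) := by
    intro q
    rw [hZ, gB_smul_left, gB_smul_right]
    ring
  refine ⟨?_, hZ1 ▸ transverse φ ?_, hZ2 ▸ transverse ψ ?_⟩
  · simp_rw [kinetic]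
    rw [dd_add ((differentiableAt_gB_self hZd).const_mul _) hVd,
      dd_half_gB_self_of_eq_smul hsym hZd (congrFun hZ p), force, add_neg_cancel]
  · simp only [hZ0, cross_eq_crossProduct, dot_self_cross]
  · simp only [hZ0, cross_eq_crossProduct, dot_cross_self]

/-- derivation of the fundamental equations (2.9)–(2.11) of the generalized
Szebehely problem from the force condition `g_{ij} Z(Zʲ) = −∂V/∂xⁱ` with `Z = h·Z0`. -/
theorem fundamental_equations
    (g : Matrix (Fin 3) (Fin 3) ℝ) (hsym : g.IsSymm) (hinv : IsUnit g.det)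
    (U : Set (Fin 3 → ℝ)) (hU : IsOpen U)
    (φ ψ h V : (Fin 3 → ℝ) → ℝ)
    (hφ : ContDiffOn ℝ (⊤ : ℕ∞) φ U) (hψ : ContDiffOn ℝ (⊤ : ℕ∞) ψ U)
    (hh : ContDiffOn ℝ (⊤ : ℕ∞) h U) (hV : ContDiffOn ℝ (⊤ : ℕ∞) V U)
    (hind : ∀ p ∈ U, cross (grad φ p) (grad ψ p) ≠ 0)
    (Z0 Z1 Z2 Z : (Fin 3 → ℝ) → (Fin 3 → ℝ))
    (hZ0 : Z0 = fun p => cross (grad φ p) (grad ψ p))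
    (hZ1 : Z1 = fun p => g⁻¹.mulVec (grad φ p))
    (hZ2 : Z2 = fun p => g⁻¹.mulVec (grad ψ p))
    (hZ : Z = fun p => h p • Z0 p)
    (hforce : ∀ p ∈ U, ∀ i,
      (∑ j, g i j * (∑ k, Z p k * pd k (fun q => Z q j) p)) = - pd i V p)
    (p : Fin 3 → ℝ) (hp : p ∈ U) :
    dd (Z0 p) (fun q => 1/2 * h q ^ 2 * gB g (Z0 q) (Z0 q) + V q) p = 0 ∧
    dd (Z1 p) V p = - h p ^ 2 * dd (nab Z0 p) φ p ∧
    dd (Z2 p) V p = - h p ^ 2 * dd (nab Z0 p) ψ p :=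
  fundamental_equations_general g hsym hinv U hU φ ψ h V hφ hψ hh hV Z0 Z1 Z2 Z hZ0 hZ1 hZ2 hZ
    hforce p hp
end
end

section
/- Let g be a constant real symmetric invertible 3×3 matrix, φ, ψ : U → ℝ smooth on an open set U ⊆ ℝ³ with ∇φ × ∇ψ ≠ 0 on U; set Z0 := ∇φ × ∇ψ, Z1 := g⁻¹∇φ, Z2 := g⁻¹∇ψ, X := (∇_{Z0}Z0(ψ))·Z1 − (∇_{Z0}Z0(φ))·Z2, and (assuming ∇_{Z0}Z0(φ) is nowhere zero on U) A := ½ g(Z0,Z0)/∇_{Z0}Z0(φ). Suppose a, b : U → ℝ are smooth with [X, Z1] = a·X + b·Z1 on U. Let ρ : U → ℝ be smooth and nowhere zero and set X̃ := ρ²·X (which equals the X built from Z̃0 := ρZ0) and Ã := A. Then [X̃, Z1] = (a − Z1(ρ²)/ρ²)·X̃ + (ρ²b)·Z1, and X̃(Ã) + (ρ²b)·Ã = ρ²·(X(A) + b·A). -/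
noncomputable section

set_option linter.unusedVariables false

/-! Multiplying a vector field by a function `f` changes its bracket with `W` only by the Leibniz
term `-W(f)·V`, so `[ρ²X, Z1] = ρ²[X, Z1] - Z1(ρ²)·X`, which is the first claim after
substituting `[X, Z1] = a·X + b·Z1`. The directional derivative is linear in the direction, so
`X̃(A) = ρ²·X(A)`. -/

section Smoothness

variable {U : Set (Fin 3 → ℝ)} {n : WithTop ℕ∞}

theorem ContDiffOn.pd (hU : IsOpen U) {f : (Fin 3 → ℝ) → ℝ} (hf : ContDiffOn ℝ (⊤ : ℕ∞) f U)
    (i : Fin 3) : ContDiffOn ℝ (⊤ : ℕ∞) (pd i f) U :=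
  (hf.fderiv_of_isOpen hU (by exact_mod_cast le_top)).clm_apply contDiffOn_const

theorem ContDiffOn.grad (hU : IsOpen U) {f : (Fin 3 → ℝ) → ℝ}
    (hf : ContDiffOn ℝ (⊤ : ℕ∞) f U) : ContDiffOn ℝ (⊤ : ℕ∞) (grad f) U :=
  contDiffOn_pi.2 (hf.pd hU)

theorem ContDiffOn.cross {u v : (Fin 3 → ℝ) → (Fin 3 → ℝ)} (hu : ContDiffOn ℝ n u U)
    (hv : ContDiffOn ℝ n v U) : ContDiffOn ℝ n (fun q => cross (u q) (v q)) U := by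
  have hu' := contDiffOn_pi.1 hu
  have hv' := contDiffOn_pi.1 hv
  refine contDiffOn_pi.2 fun i => ?_
  fin_cases i
  · exact ((hu' 1).mul (hv' 2)).sub ((hu' 2).mul (hv' 1))
  · exact ((hu' 2).mul (hv' 0)).sub ((hu' 0).mul (hv' 2))
  · exact ((hu' 0).mul (hv' 1)).sub ((hu' 1).mul (hv' 0))

theorem ContDiffOn.matrix_mulVec (M : Matrix (Fin 3) (Fin 3) ℝ) {v : (Fin 3 → ℝ) → (Fin 3 → ℝ)}
    (hv : ContDiffOn ℝ n v U) : ContDiffOn ℝ n (fun q => M.mulVec (v q)) U :=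
  (LinearMap.toContinuousLinearMap (Matrix.mulVecLin M)).contDiff.comp_contDiffOn hv

theorem ContDiffOn.dd (hU : IsOpen U) {v : (Fin 3 → ℝ) → (Fin 3 → ℝ)} {f : (Fin 3 → ℝ) → ℝ}
    (hv : ContDiffOn ℝ (⊤ : ℕ∞) v U) (hf : ContDiffOn ℝ (⊤ : ℕ∞) f U) :
    ContDiffOn ℝ (⊤ : ℕ∞) (fun q => dd (v q) f q) U :=
  ContDiffOn.sum fun i _ => (contDiffOn_pi.1 hv i).mul (hf.pd hU i)

theorem ContDiffOn.nab (hU : IsOpen U) {W : (Fin 3 → ℝ) → (Fin 3 → ℝ)}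
    (hW : ContDiffOn ℝ (⊤ : ℕ∞) W U) : ContDiffOn ℝ (⊤ : ℕ∞) (nab W) U :=
  contDiffOn_pi.2 fun i => ContDiffOn.sum fun j _ =>
    (contDiffOn_pi.1 hW j).mul ((contDiffOn_pi.1 hW i).pd hU j)

end Smoothness

theorem pd_mul {f g : (Fin 3 → ℝ) → ℝ} {p : Fin 3 → ℝ}
    (hf : DifferentiableAt ℝ f p) (hg : DifferentiableAt ℝ g p) (j : Fin 3) :
    pd j (fun q => f q * g q) p = pd j f p * g p + f p * pd j g p := by
  simp only [pd, fderiv_fun_mul hf hg, add_apply, smul_apply, smul_eq_mul]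
  ring

theorem dd_smul (c : ℝ) (v : Fin 3 → ℝ) (f : (Fin 3 → ℝ) → ℝ) (p : Fin 3 → ℝ) :
    dd (c • v) f p = c * dd v f p := by
  simp only [dd, Pi.smul_apply, smul_eq_mul, Finset.mul_sum, mul_assoc]

theorem lieB_smul_left {f : (Fin 3 → ℝ) → ℝ} {V : (Fin 3 → ℝ) → (Fin 3 → ℝ)}
    (W : (Fin 3 → ℝ) → (Fin 3 → ℝ)) {p : Fin 3 → ℝ}
    (hf : DifferentiableAt ℝ f p) (hV : DifferentiableAt ℝ V p) :
    lieB (fun q => f q • V q) W p = f p • lieB V W p - dd (W p) f p • V p := by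
  ext i
  simp only [lieB, dd, Pi.sub_apply, Pi.smul_apply, smul_eq_mul,
    pd_mul hf (differentiableAt_pi.1 hV i), Finset.mul_sum, Finset.sum_mul,
    ← Finset.sum_sub_distrib]
  exact Finset.sum_congr rfl fun j _ => by ring

theorem rescaling_bracket_invariance_general
    (g : Matrix (Fin 3) (Fin 3) ℝ)
    (U : Set (Fin 3 → ℝ)) (hU : IsOpen U)
    (φ ψ : (Fin 3 → ℝ) → ℝ)
    (hφ : ContDiffOn ℝ (⊤ : ℕ∞) φ U) (hψ : ContDiffOn ℝ (⊤ : ℕ∞) ψ U)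
    (Z0 Z1 Z2 X : (Fin 3 → ℝ) → (Fin 3 → ℝ))
    (hZ0 : Z0 = fun p => cross (grad φ p) (grad ψ p))
    (hZ1 : Z1 = fun p => g⁻¹.mulVec (grad φ p))
    (hZ2 : Z2 = fun p => g⁻¹.mulVec (grad ψ p))
    (hX : X = fun p => dd (nab Z0 p) ψ p • Z1 p - dd (nab Z0 p) φ p • Z2 p)
    (A : (Fin 3 → ℝ) → ℝ)
    (a b : (Fin 3 → ℝ) → ℝ)
    (hbr : ∀ p ∈ U, lieB X Z1 p = a p • X p + b p • Z1 p)
    (ρ : (Fin 3 → ℝ) → ℝ) (hρ : ContDiffOn ℝ (⊤ : ℕ∞) ρ U)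
    (hρnz : ∀ p ∈ U, ρ p ≠ 0)
    (Xt : (Fin 3 → ℝ) → (Fin 3 → ℝ)) (hXt : Xt = fun p => ρ p ^ 2 • X p)
    (p : Fin 3 → ℝ) (hp : p ∈ U) :
    lieB Xt Z1 p
        = (a p - dd (Z1 p) (fun q => ρ q ^ 2) p / ρ p ^ 2) • Xt p
          + (ρ p ^ 2 * b p) • Z1 p ∧
    dd (Xt p) A p + (ρ p ^ 2 * b p) * A p = ρ p ^ 2 * (dd (X p) A p + b p * A p) := by
  have hXsmooth : ContDiffOn ℝ (⊤ : ℕ∞) X U := by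
    have hZ0s : ContDiffOn ℝ (⊤ : ℕ∞) Z0 U := hZ0 ▸ (hφ.grad hU).cross (hψ.grad hU)
    rw [hX, hZ1, hZ2]
    exact (((hZ0s.nab hU).dd hU hψ).smul ((hφ.grad hU).matrix_mulVec g⁻¹)).sub
      (((hZ0s.nab hU).dd hU hφ).smul ((hψ.grad hU).matrix_mulVec g⁻¹))
  have hUp : U ∈ nhds p := hU.mem_nhds hp
  have hXp : DifferentiableAt ℝ X p :=
    (hXsmooth.differentiableOn (by simp)).differentiableAt hUp
  have hρ2p : DifferentiableAt ℝ (fun q => ρ q ^ 2) p :=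
    ((hρ.differentiableOn (by simp)).differentiableAt hUp).pow 2
  have hρp : ρ p ≠ 0 := hρnz p hp
  subst hXt
  refine ⟨?_, ?_⟩
  · rw [lieB_smul_left Z1 hρ2p hXp, hbr p hp]
    match_scalars <;> field_simp
  · rw [dd_smul]
    ring

/-- rescaling does not affect the vanishing of `X(A) + b·A` (Section 4):
with `X̃ = ρ²·X` one has `[X̃,Z1] = (a − Z1(ρ²)/ρ²)·X̃ + (ρ²b)·Z1` and
`X̃(Ã) + (ρ²b)·Ã = ρ²·(X(A) + b·A)`. -/
theorem rescaling_bracket_invariance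
    (g : Matrix (Fin 3) (Fin 3) ℝ) (hsym : g.IsSymm) (hinv : IsUnit g.det)
    (U : Set (Fin 3 → ℝ)) (hU : IsOpen U)
    (φ ψ : (Fin 3 → ℝ) → ℝ)
    (hφ : ContDiffOn ℝ (⊤ : ℕ∞) φ U) (hψ : ContDiffOn ℝ (⊤ : ℕ∞) ψ U)
    (hind : ∀ p ∈ U, cross (grad φ p) (grad ψ p) ≠ 0)
    (Z0 Z1 Z2 X : (Fin 3 → ℝ) → (Fin 3 → ℝ))
    (hZ0 : Z0 = fun p => cross (grad φ p) (grad ψ p))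
    (hZ1 : Z1 = fun p => g⁻¹.mulVec (grad φ p))
    (hZ2 : Z2 = fun p => g⁻¹.mulVec (grad ψ p))
    (hX : X = fun p => dd (nab Z0 p) ψ p • Z1 p - dd (nab Z0 p) φ p • Z2 p)
    (hD : ∀ p ∈ U, dd (nab Z0 p) φ p ≠ 0)
    (A : (Fin 3 → ℝ) → ℝ)
    (hA : A = fun p => 1/2 * gB g (Z0 p) (Z0 p) / dd (nab Z0 p) φ p)
    (a b : (Fin 3 → ℝ) → ℝ)
    (ha : ContDiffOn ℝ (⊤ : ℕ∞) a U) (hb : ContDiffOn ℝ (⊤ : ℕ∞) b U)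
    (hbr : ∀ p ∈ U, lieB X Z1 p = a p • X p + b p • Z1 p)
    (ρ : (Fin 3 → ℝ) → ℝ) (hρ : ContDiffOn ℝ (⊤ : ℕ∞) ρ U)
    (hρnz : ∀ p ∈ U, ρ p ≠ 0)
    (Xt : (Fin 3 → ℝ) → (Fin 3 → ℝ)) (hXt : Xt = fun p => ρ p ^ 2 • X p)
    (p : Fin 3 → ℝ) (hp : p ∈ U) :
    lieB Xt Z1 p
        = (a p - dd (Z1 p) (fun q => ρ q ^ 2) p / ρ p ^ 2) • Xt p
          + (ρ p ^ 2 * b p) • Z1 p ∧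
    dd (Xt p) A p + (ρ p ^ 2 * b p) * A p = ρ p ^ 2 * (dd (X p) A p + b p * A p) :=
  rescaling_bracket_invariance_general g U hU φ ψ hφ hψ Z0 Z1 Z2 X hZ0 hZ1 hZ2 hX A a b hbr ρ hρ
    hρnz Xt hXt p hp
end
end
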